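/- arXiv:0905.4580 — 4 statements merged into one kernel-verified Lean document; each statement's English description precedes it below -/
import Mathlib

section
/- In the Skinner-Rusk setting, every point P = (v, p) ∈ T†Q at which there exists a tangent vector Ξ ∈ T_P(T†Q) with i_Ξ ω_P + (dE_L)_P = 0 satisfies p = F L(v), where F L : TQ → T*Q is the fiber derivative (Legendre transform) of L; conversely every point of the graph of F L admits such a Ξ. Hence the primary constraint set 𝒫 ⊂ T†Q equals the graph of the Legendre transform F L. -/
/- Skinner-Rusk setting in coordinates: a point of T†Q is P = (q, v, p);
ω is the pullback of the canonical symplectic form, E_L(q, v, p) = Σ pᵢvᵢ − L(q,v);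
a tangent vector at P is Ξ = (A₀, B₀, C₀) and i_Ξ ω_P + (dE_L)_P = 0 is
required on all tangent vectors (A, B, C).  The Legendre transform is
(F L(q,v))ᵢ = ∂L/∂vᵢ = dL(q,v)(0, eᵢ). -/

lemma pi_expand (m : ℕ) (A : Fin m → ℝ) :
    A = ∑ i, A i • (Pi.single i 1 : Fin m → ℝ) := by
  ext j
  simp [Pi.single_apply, mul_ite]

/-- A continuous linear functional on `(Fin m → ℝ) × (Fin m → ℝ)` expands in the
standard basis. -/
lemma clm_expand (m : ℕ) (f : (Fin m → ℝ) × (Fin m → ℝ) →L[ℝ] ℝ)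
    (A B : Fin m → ℝ) :
    f (A, B) = (∑ i, A i * f (Pi.single i 1, 0)) + ∑ i, B i * f (0, Pi.single i 1) := by
  have hAB : (A, B) = (∑ i, A i • ((Pi.single i 1 : Fin m → ℝ), (0 : Fin m → ℝ)))
      + ∑ i, B i • ((0 : Fin m → ℝ), (Pi.single i 1 : Fin m → ℝ)) := by
    rw [Prod.ext_iff]
    constructor <;> simp [Prod.fst_sum, Prod.snd_sum] <;>
      exact pi_expand m _
  rw [hAB, map_add, map_sum, map_sum]
  simp only [map_smul, smul_eq_mul]

/-- A point `P = (q, v, p) ∈ T†Q` admits a tangent vector `Ξ`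
with `i_Ξ ω_P + (dE_L)_P = 0` if and only if `p = F L(v)`; hence the primary
constraint set `𝒫` equals the graph of the Legendre transform `F L`. -/
theorem primary_constraint_eq_graph_legendre (m : ℕ)
    (L : (Fin m → ℝ) × (Fin m → ℝ) → ℝ) (hL : Differentiable ℝ L)
    (q v p : Fin m → ℝ) :
    (∃ a b c : Fin m → ℝ, ∀ A B C : Fin m → ℝ,
        ((∑ i, c i * A i) - ∑ i, C i * a i)
          + ((∑ i, C i * v i) + (∑ i, p i * B i)
              - fderiv ℝ L (q, v) (A, B)) = 0)
      ↔ (∀ i, p i = fderiv ℝ L (q, v) (0, Pi.single i 1)) := by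
  constructor
  · rintro ⟨a, b, c, h⟩ i
    have h2 : (∑ j, p j * (Pi.single i 1 : Fin m → ℝ) j) = p i := by
      simp [Pi.single_apply, mul_ite]
    have h3 := h 0 (Pi.single i 1) 0
    simp only [Pi.zero_apply, mul_zero, zero_mul, Finset.sum_const_zero, sub_zero, zero_sub,
      zero_add, add_zero] at h3
    rw [h2] at h3
    linarith
  · intro hp
    refine ⟨v, 0, fun i => fderiv ℝ L (q, v) (Pi.single i 1, 0), fun A B C => ?_⟩
    have hexp := clm_expand m (fderiv ℝ L (q, v)) A B
    have hB : (∑ i, p i * B i) = ∑ i, B i * fderiv ℝ L (q, v) (0, Pi.single i 1) := by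
      exact Finset.sum_congr rfl fun i _ => by rw [hp i, mul_comm]
    have hc : (∑ i, fderiv ℝ L (q, v) (Pi.single i 1, 0) * A i)
        = ∑ i, A i * fderiv ℝ L (q, v) (Pi.single i 1, 0) :=
      Finset.sum_congr rfl fun i _ => mul_comm _ _
    rw [hexp, hB, hc]
    ring
end

section
/- Let α : P → M be a smooth fiber bundle, ω a closed (n+1)-form on P lying in the ideal Λ₂ (i.e., vanishing when contracted with three vectors vertical over M), where n = dim M. Let β : P' → P be a surjective submersive bundle morphism over M and ω' := β*(ω). Then a local section σ' of P' → M satisfies the PD-Hamilton equations of ω' if and only if β ∘ σ' satisfies the PD-Hamilton equations of ω. -/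
/- Coordinate model of a PD-Hamiltonian system.  The base is M = ℝⁿ, the
bundles are the trivial bundles P = ℝⁿ × ℝᵏ and P' = ℝⁿ × ℝ^{k'}; a tangent
vector to P is a pair (first component: base direction).  An (n+1)-form on P
is a field of alternating (n+1)-multilinear maps ω.  Closedness is expressed
by the usual coordinate formula for dω, and membership in the ideal by the
vanishing of ω on any three q-vertical arguments.  A section σ of P → M
satisfies the PD-Hamilton equations of ω iff, for every x and every vertical
vector ξ, the contraction of ω at σ(x) with ξ and the n tangent vectors
(e_j, dσ(e_j)) to the image of σ vanishes.  β is a surjective submersive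
bundle morphism over M, and ω' = β*(ω). -/

/-- With `ω' := β*(ω)`, a local section `σ'` of `P' → M`
satisfies the PD-Hamilton equations of `ω'` iff `β ∘ σ'` satisfies the
PD-Hamilton equations of `ω`. -/
theorem pdHamilton_pullback_iff (n k k' : ℕ)
    (ω : (Fin n → ℝ) × (Fin k → ℝ) →
      AlternatingMap ℝ ((Fin n → ℝ) × (Fin k → ℝ)) ℝ (Fin (n + 1)))
    (hωdiff : ∀ w : Fin (n + 1) → (Fin n → ℝ) × (Fin k → ℝ),
      Differentiable ℝ (fun p => ω p w))
    (hclosed : ∀ (p : (Fin n → ℝ) × (Fin k → ℝ))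
        (v : Fin (n + 2) → (Fin n → ℝ) × (Fin k → ℝ)),
      ∑ i : Fin (n + 2),
        (-1 : ℝ) ^ (i : ℕ) * fderiv ℝ (fun x => ω x (v ∘ i.succAbove)) p (v i)
        = 0)
    (hideal : ∀ (p : (Fin n → ℝ) × (Fin k → ℝ))
        (w : Fin (n + 1) → (Fin n → ℝ) × (Fin k → ℝ)),
      (∃ a b c : Fin (n + 1), a ≠ b ∧ a ≠ c ∧ b ≠ c ∧
        (w a).1 = 0 ∧ (w b).1 = 0 ∧ (w c).1 = 0) → ω p w = 0)
    (β : (Fin n → ℝ) × (Fin k' → ℝ) → (Fin n → ℝ) × (Fin k → ℝ))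
    (hβ : ContDiff ℝ (⊤ : ℕ∞) β)
    (hβbase : ∀ p', (β p').1 = p'.1)
    (hβsurj : Function.Surjective β)
    (hβsubm : ∀ p', Function.Surjective (fderiv ℝ β p'))
    (σ' : (Fin n → ℝ) → Fin k' → ℝ) (hσ' : Differentiable ℝ σ') :
    -- PD-Hamilton equations for ω' = β*(ω) along σ' ...
    (∀ (x : Fin n → ℝ) (η : Fin k' → ℝ),
        ω (β (x, σ' x))
          (fun idx => fderiv ℝ β (x, σ' x)
            ((Fin.cons ((0 : Fin n → ℝ), η)
              (fun j : Fin n => ((Pi.single j 1 : Fin n → ℝ),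
                fderiv ℝ σ' x (Pi.single j 1)))
              : Fin (n + 1) → (Fin n → ℝ) × (Fin k' → ℝ)) idx)) = 0)
      ↔
    -- ... iff PD-Hamilton equations for ω along β ∘ σ'.
    (∀ (x : Fin n → ℝ) (ξ : Fin k → ℝ),
        ω (x, (β (x, σ' x)).2)
          (Fin.cons ((0 : Fin n → ℝ), ξ)
            (fun j : Fin n => ((Pi.single j 1 : Fin n → ℝ),
              fderiv ℝ (fun z => (β (z, σ' z)).2) x (Pi.single j 1)))) = 0) := by

  have hβd : Differentiable ℝ β := hβ.differentiable (by simp)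
  -- first component of the differential of β is the identity on base directions
  have hfst : ∀ (q : (Fin n → ℝ) × (Fin k' → ℝ)) (v : (Fin n → ℝ) × (Fin k' → ℝ)),
      (fderiv ℝ β q v).1 = v.1 := by
    intro q v
    have h1 : HasFDerivAt (fun p => (β p).1)
        ((ContinuousLinearMap.fst ℝ (Fin n → ℝ) (Fin k → ℝ)).comp (fderiv ℝ β q)) q :=
      (hβd q).hasFDerivAt.fst
    have heq : (fun p => (β p).1) = (fun p : (Fin n → ℝ) × (Fin k' → ℝ) => p.1) :=
      funext hβbase
    rw [heq] at h1
    have h2 : HasFDerivAt (fun p : (Fin n → ℝ) × (Fin k' → ℝ) => p.1)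
        (ContinuousLinearMap.fst ℝ (Fin n → ℝ) (Fin k' → ℝ)) q :=
      hasFDerivAt_fst
    have huniq := h1.unique h2
    calc (fderiv ℝ β q v).1
        = ((ContinuousLinearMap.fst ℝ (Fin n → ℝ) (Fin k → ℝ)).comp (fderiv ℝ β q)) v := rfl
      _ = v.1 := by rw [huniq]; rfl
  -- the differential of the composed section
  have hS : ∀ (x : Fin n → ℝ) (v : Fin n → ℝ),
      fderiv ℝ (fun z => (β (z, σ' z)).2) x v
        = (fderiv ℝ β (x, σ' x) (v, fderiv ℝ σ' x v)).2 := by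
    intro x v
    have hG : HasFDerivAt (fun z : Fin n → ℝ => (z, σ' z))
        ((ContinuousLinearMap.id ℝ (Fin n → ℝ)).prod (fderiv ℝ σ' x)) x :=
      HasFDerivAt.prodMk (hasFDerivAt_id x) (hσ' x).hasFDerivAt
    have hC : HasFDerivAt (fun z : Fin n → ℝ => β (z, σ' z))
        ((fderiv ℝ β (x, σ' x)).comp
          ((ContinuousLinearMap.id ℝ (Fin n → ℝ)).prod (fderiv ℝ σ' x))) x :=
      (hβd (x, σ' x)).hasFDerivAt.comp x hG
    have hD : HasFDerivAt (fun z : Fin n → ℝ => (β (z, σ' z)).2)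
        ((ContinuousLinearMap.snd ℝ (Fin n → ℝ) (Fin k → ℝ)).comp
          ((fderiv ℝ β (x, σ' x)).comp
            ((ContinuousLinearMap.id ℝ (Fin n → ℝ)).prod (fderiv ℝ σ' x)))) x :=
      hC.snd
    rw [hD.fderiv]
    rfl
  have hpoint : ∀ x : Fin n → ℝ, β (x, σ' x) = (x, (β (x, σ' x)).2) := by
    intro x
    exact Prod.ext_iff.mpr ⟨hβbase (x, σ' x), rfl⟩
  constructor
  · intro H x ξ
    obtain ⟨v, hv⟩ := hβsubm (x, σ' x) ((0 : Fin n → ℝ), ξ)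
    have hv1 : v.1 = 0 := by
      have h := hfst (x, σ' x) v
      rw [hv] at h
      exact h.symm
    have hH := H x v.2
    rw [hpoint x] at hH
    have hargs : (fun idx => fderiv ℝ β (x, σ' x)
          ((Fin.cons ((0 : Fin n → ℝ), v.2)
            (fun j : Fin n => ((Pi.single j 1 : Fin n → ℝ),
              fderiv ℝ σ' x (Pi.single j 1)))
            : Fin (n + 1) → (Fin n → ℝ) × (Fin k' → ℝ)) idx))
        = (Fin.cons ((0 : Fin n → ℝ), ξ)
            (fun j : Fin n => ((Pi.single j 1 : Fin n → ℝ),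
              fderiv ℝ (fun z => (β (z, σ' z)).2) x (Pi.single j 1)))
            : Fin (n + 1) → (Fin n → ℝ) × (Fin k → ℝ)) := by
      funext idx
      refine Fin.cases ?_ ?_ idx
      · simp only [Fin.cons_zero]
        have hveq : ((0 : Fin n → ℝ), v.2) = v := Prod.ext_iff.mpr ⟨hv1.symm, rfl⟩
        rw [hveq, hv]
      · intro j
        simp only [Fin.cons_succ]
        exact Prod.ext_iff.mpr ⟨hfst _ _, (hS x _).symm⟩
    rw [hargs] at hH
    exact hH
  · intro H x η
    have hH := H x ((fderiv ℝ β (x, σ' x) ((0 : Fin n → ℝ), η)).2)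
    rw [hpoint x]
    have hargs : (fun idx => fderiv ℝ β (x, σ' x)
          ((Fin.cons ((0 : Fin n → ℝ), η)
            (fun j : Fin n => ((Pi.single j 1 : Fin n → ℝ),
              fderiv ℝ σ' x (Pi.single j 1)))
            : Fin (n + 1) → (Fin n → ℝ) × (Fin k' → ℝ)) idx))
        = (Fin.cons ((0 : Fin n → ℝ), (fderiv ℝ β (x, σ' x) ((0 : Fin n → ℝ), η)).2)
            (fun j : Fin n => ((Pi.single j 1 : Fin n → ℝ),
              fderiv ℝ (fun z => (β (z, σ' z)).2) x (Pi.single j 1)))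
            : Fin (n + 1) → (Fin n → ℝ) × (Fin k → ℝ)) := by
      funext idx
      refine Fin.cases ?_ ?_ idx
      · simp only [Fin.cons_zero]
        exact Prod.ext_iff.mpr ⟨hfst _ _, rfl⟩
      · intro j
        simp only [Fin.cons_succ]
        exact Prod.ext_iff.mpr ⟨hfst _ _, (hS x _).symm⟩
    rw [hargs]
    exact hH
end

section
/- Let L be a smooth function on a finite-order jet space of a fiber bundle with one dependent variable u and total derivatives D_I. Define the Euler–Lagrange derivative δL/δu := Σ_I (−1)^{|I|} D_I(∂L/∂u_I). If L = D_j(F) is a total derivative of some smooth function F on a finite-order jet space, then δL/δu = 0. -/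
/-!
The total derivatives `D_i` are commuting derivations, and on jet coordinates
`∂/∂u_I ∘ D_j = D_j ∘ ∂/∂u_I + [j ∈ I] ∂/∂u_{I∖j}`. Writing `E_k F = Σ_{|I|=k} D_I (∂F/∂u_I)`,
this gives `E_0 (D_j F) = D_j (E_0 F)` and `E_{k+1} (D_j F) = D_j (E_{k+1} F) + D_j (E_k F)`, so the
alternating sum defining the Euler–Lagrange derivative of `D_j F` up to order `N` telescopes to
`(-1)^N D_j (E_N F)`, which vanishes once `N` exceeds the order of `F`.
-/

open MvPolynomial

open MvPolynomial

/-- Coordinates on the infinite jet space of a bundle with `n` independent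
variables `xⁱ` and `m` dependent variables `u^α`: base variables `Sum.inl i`
and jet variables `Sum.inr (α, I)` = `u^α_I`, indexed by unordered
multiindices `I` (multisets in `Fin n`). -/
abbrev JetVar (n m : ℕ) := Sum (Fin n) (Fin m × Multiset (Fin n))

/-- The `i`-th total derivative
`D_i = ∂/∂xⁱ + Σ_{α,I} u^α_{Ii} ∂/∂u^α_I` on jet-space functions
(modeled as polynomials in the jet coordinates). -/
noncomputable def totalDeriv (n m : ℕ) (i : Fin n)
    (F : MvPolynomial (JetVar n m) ℝ) : MvPolynomial (JetVar n m) ℝ :=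
  pderiv (Sum.inl i) F +
    ∑ v ∈ F.vars,
      match v with
      | Sum.inl _ => 0
      | Sum.inr (α, I) => X (Sum.inr (α, i ::ₘ I)) * pderiv (Sum.inr (α, I)) F

/-- Iterated total derivative `D_I` over the entries of the multiindex `I`. -/
noncomputable def totalDerivI (n m : ℕ) (I : Multiset (Fin n))
    (F : MvPolynomial (JetVar n m) ℝ) : MvPolynomial (JetVar n m) ℝ :=
  I.toList.foldr (totalDeriv n m) F

/-- The Euler–Lagrange derivative
`δF/δu^α = Σ_{|I| ≤ N} (−1)^{|I|} D_I (∂F/∂u^α_I)` truncated at order `N`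
(the sum is finite, and stabilizes once `N` bounds the order of `F`). -/
noncomputable def elDeriv (n m N : ℕ) (α : Fin m)
    (F : MvPolynomial (JetVar n m) ℝ) : MvPolynomial (JetVar n m) ℝ :=
  ∑ k ∈ Finset.range (N + 1), ∑ I : Sym (Fin n) k,
    (-1 : MvPolynomial (JetVar n m) ℝ) ^ k *
      totalDerivI n m I.toMultiset (pderiv (Sum.inr (α, I.toMultiset)) F)

theorem MvPolynomial.derivation_eq_sum_mul_pderiv {R σ : Type*} [CommSemiring R] [DecidableEq σ]
    (D : Derivation R (MvPolynomial σ R) (MvPolynomial σ R)) (f : MvPolynomial σ R) :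
    D f = ∑ i ∈ f.vars, D (X i) * pderiv i f := by
  let D' : Derivation R (MvPolynomial σ R) (MvPolynomial σ R) := ∑ i ∈ f.vars, D (X i) • pderiv i
  have hD' (g) : D' g = ∑ i ∈ f.vars, D (X i) * pderiv i g := by
    rw [← Derivation.coeFnAddMonoidHom_apply, map_sum, Finset.sum_apply]
    rfl
  rw [← hD']
  refine derivation_eq_of_forall_mem_vars fun i hi => ?_
  rw [hD', Finset.sum_eq_single_of_mem i hi fun k _ hk => by simp [hk.symm]]
  simp

theorem Multiset.cons_eq_iff_mem_and_eq_erase {α : Type*} [DecidableEq α] {a : α}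
    {s t : Multiset α} : a ::ₘ s = t ↔ a ∈ t ∧ s = t.erase a := by
  rw [← Multiset.singleton_add, add_comm, Multiset.add_singleton_eq_iff]

theorem Sym.sum_filter_mem {α M : Type*} [Fintype α] [DecidableEq α] [AddCommMonoid M] (a : α)
    {k : ℕ} (f : Sym α (k + 1) → M) :
    ∑ s with a ∈ s, f s = ∑ s : Sym α k, f (a ::ₛ s) := by
  symm
  refine Finset.sum_bij (fun s _ => a ::ₛ s) (fun s _ => by simp)
    (fun s _ t _ h => (Sym.cons_inj_right a s t).mp h) (fun s hs => ?_) (fun _ _ => rfl)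
  exact ⟨s.erase a (Finset.mem_filter.mp hs).2, Finset.mem_univ _, Sym.cons_erase _⟩

section

variable {n m : ℕ}

noncomputable def totalDerivation (n m : ℕ) (i : Fin n) :
    Derivation ℝ (MvPolynomial (JetVar n m) ℝ) (MvPolynomial (JetVar n m) ℝ) :=
  mkDerivation ℝ <| Sum.elim (Pi.single i 1) fun v => X (Sum.inr (v.1, i ::ₘ v.2))

@[simp]
theorem totalDerivation_X_inl (i k : Fin n) :
    totalDerivation n m i (X (Sum.inl k)) = if k = i then 1 else 0 := by
  simp [totalDerivation, mkDerivation_X, Pi.single_apply]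

@[simp]
theorem totalDerivation_X_inr (i : Fin n) (α : Fin m) (I : Multiset (Fin n)) :
    totalDerivation n m i (X (Sum.inr (α, I))) = X (Sum.inr (α, i ::ₘ I)) :=
  mkDerivation_X _ _ _

theorem totalDeriv_eq_totalDerivation (i : Fin n) (F : MvPolynomial (JetVar n m) ℝ) :
    totalDeriv n m i F = totalDerivation n m i F := by
  rw [totalDeriv, derivation_eq_sum_mul_pderiv (pderiv _), derivation_eq_sum_mul_pderiv,
    ← Finset.sum_add_distrib]
  refine Finset.sum_congr rfl fun v _ => ?_
  rcases v with k | ⟨α, I⟩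
  · simp [pderiv_X, Pi.single_apply]
  · simp [pderiv_X]

theorem totalDerivation_comm (i k : Fin n) (F : MvPolynomial (JetVar n m) ℝ) :
    totalDerivation n m i (totalDerivation n m k F) =
      totalDerivation n m k (totalDerivation n m i F) := by
  suffices h : ⁅totalDerivation n m i, totalDerivation n m k⁆ = 0 by
    simpa [Derivation.commutator_apply, sub_eq_zero] using congr($h F)
  refine derivation_ext ?_
  rintro (l | ⟨α, I⟩)
  · simp [Derivation.commutator_apply, apply_ite]
  · simp [Derivation.commutator_apply, Multiset.cons_swap]

theorem pderiv_totalDerivation (i : Fin n) (α : Fin m) (I : Multiset (Fin n))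
    (F : MvPolynomial (JetVar n m) ℝ) :
    pderiv (Sum.inr (α, I)) (totalDerivation n m i F) =
      totalDerivation n m i (pderiv (Sum.inr (α, I)) F) +
        if i ∈ I then pderiv (Sum.inr (α, I.erase i)) F else 0 := by
  suffices h : ⁅(pderiv (Sum.inr (α, I)) : Derivation ℝ (MvPolynomial (JetVar n m) ℝ) _),
      totalDerivation n m i⁆ = if i ∈ I then pderiv (Sum.inr (α, I.erase i)) else 0 by
    rw [← sub_eq_iff_eq_add', ← Derivation.commutator_apply, h]
    split_ifs <;> rfl
  refine derivation_ext ?_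
  rintro (l | ⟨β, J⟩) <;> split_ifs <;>
    simp_all [Derivation.commutator_apply, pderiv_X, Pi.single_apply, apply_ite,
      Multiset.cons_eq_iff_mem_and_eq_erase]

instance (n m : ℕ) : LeftCommutative (totalDeriv n m) :=
  ⟨fun i k F => by simp only [totalDeriv_eq_totalDerivation, totalDerivation_comm i k]⟩

theorem totalDerivI_eq_foldr (I : Multiset (Fin n)) (F : MvPolynomial (JetVar n m) ℝ) :
    totalDerivI n m I F = I.foldr (totalDeriv n m) F := by
  rw [totalDerivI, ← Multiset.coe_foldr, Multiset.coe_toList]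

@[simp]
theorem totalDerivI_zero_left (F : MvPolynomial (JetVar n m) ℝ) : totalDerivI n m 0 F = F := by
  simp [totalDerivI_eq_foldr]

theorem totalDerivI_cons (i : Fin n) (I : Multiset (Fin n)) (F : MvPolynomial (JetVar n m) ℝ) :
    totalDerivI n m (i ::ₘ I) F = totalDeriv n m i (totalDerivI n m I F) := by
  simp [totalDerivI_eq_foldr]

theorem totalDerivI_totalDeriv (i : Fin n) (I : Multiset (Fin n))
    (F : MvPolynomial (JetVar n m) ℝ) :
    totalDerivI n m I (totalDeriv n m i F) = totalDerivI n m (i ::ₘ I) F := by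
  rw [totalDerivI_eq_foldr, totalDerivI_eq_foldr, ← Multiset.foldr_singleton (totalDeriv n m),
    ← Multiset.foldr_add, ← Multiset.singleton_add, add_comm]

@[simp]
theorem totalDerivI_zero_right (I : Multiset (Fin n)) :
    totalDerivI n m I (0 : MvPolynomial (JetVar n m) ℝ) = 0 := by
  induction I using Multiset.induction with
  | empty => simp
  | cons i I ih => simp [totalDerivI_cons, ih, totalDeriv_eq_totalDerivation]

theorem totalDerivI_add (I : Multiset (Fin n)) (F G : MvPolynomial (JetVar n m) ℝ) :
    totalDerivI n m I (F + G) = totalDerivI n m I F + totalDerivI n m I G := by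
  induction I using Multiset.induction with
  | empty => simp
  | cons i I ih => simp [totalDerivI_cons, ih, totalDeriv_eq_totalDerivation]

noncomputable def jetOrder {R : Type*} [CommSemiring R] (F : MvPolynomial (JetVar n m) R) : ℕ :=
  F.vars.sup <| Sum.elim 0 fun v => Multiset.card v.2

theorem pderiv_eq_zero_of_jetOrder_lt {R : Type*} [CommSemiring R]
    {F : MvPolynomial (JetVar n m) R} (α : Fin m) {I : Multiset (Fin n)}
    (h : jetOrder F < Multiset.card I) : pderiv (Sum.inr (α, I)) F = 0 :=
  pderiv_eq_zero_of_notMem_vars fun hI =>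
    h.not_ge (Finset.le_sup (f := Sum.elim 0 fun v : Fin m × Multiset (Fin n) => v.2.card) hI)

noncomputable def elDerivTerm (n m k : ℕ) (α : Fin m) (F : MvPolynomial (JetVar n m) ℝ) :
    MvPolynomial (JetVar n m) ℝ :=
  ∑ I : Sym (Fin n) k, totalDerivI n m I (pderiv (Sum.inr (α, I.toMultiset)) F)

theorem elDeriv_eq_sum_elDerivTerm (N : ℕ) (α : Fin m) (F : MvPolynomial (JetVar n m) ℝ) :
    elDeriv n m N α F = ∑ k ∈ Finset.range (N + 1), (-1) ^ k * elDerivTerm n m k α F := by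
  simp only [elDeriv, elDerivTerm, Finset.mul_sum]

theorem elDerivTerm_eq_zero_of_jetOrder_lt {k : ℕ} (α : Fin m) {F : MvPolynomial (JetVar n m) ℝ}
    (h : jetOrder F < k) : elDerivTerm n m k α F = 0 :=
  Finset.sum_eq_zero fun I _ => by
    rw [pderiv_eq_zero_of_jetOrder_lt α (by rwa [Sym.card_coe]), totalDerivI_zero_right]

theorem totalDerivI_pderiv_totalDeriv (j : Fin n) (α : Fin m) (I : Multiset (Fin n))
    (F : MvPolynomial (JetVar n m) ℝ) :
    totalDerivI n m I (pderiv (Sum.inr (α, I)) (totalDeriv n m j F)) =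
      totalDeriv n m j (totalDerivI n m I (pderiv (Sum.inr (α, I)) F)) +
        if j ∈ I then totalDerivI n m I (pderiv (Sum.inr (α, I.erase j)) F) else 0 := by
  rw [totalDeriv_eq_totalDerivation, pderiv_totalDerivation, totalDerivI_add,
    ← totalDeriv_eq_totalDerivation, totalDerivI_totalDeriv, totalDerivI_cons,
    apply_ite (totalDerivI n m I), totalDerivI_zero_right]

theorem elDerivTerm_totalDeriv (j : Fin n) (k : ℕ) (α : Fin m)
    (F : MvPolynomial (JetVar n m) ℝ) :
    elDerivTerm n m k α (totalDeriv n m j F) = totalDeriv n m j (elDerivTerm n m k α F) +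
      ∑ I : Sym (Fin n) k with j ∈ I,
        totalDerivI n m I (pderiv (Sum.inr (α, I.toMultiset.erase j)) F) := by
  rw [elDerivTerm, elDerivTerm, Finset.sum_filter, totalDeriv_eq_totalDerivation j (∑ _, _),
    map_sum, ← Finset.sum_add_distrib]
  refine Finset.sum_congr rfl fun I _ => ?_
  rw [← totalDeriv_eq_totalDerivation]
  exact totalDerivI_pderiv_totalDeriv j α I F

theorem elDerivTerm_zero_totalDeriv (j : Fin n) (α : Fin m) (F : MvPolynomial (JetVar n m) ℝ) :
    elDerivTerm n m 0 α (totalDeriv n m j F) = totalDeriv n m j (elDerivTerm n m 0 α F) := by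
  rw [elDerivTerm_totalDeriv, Finset.sum_eq_zero, add_zero]
  intro I hI
  simp [Sym.eq_nil_of_card_zero I] at hI

theorem elDerivTerm_succ_totalDeriv (j : Fin n) (k : ℕ) (α : Fin m)
    (F : MvPolynomial (JetVar n m) ℝ) :
    elDerivTerm n m (k + 1) α (totalDeriv n m j F) =
      totalDeriv n m j (elDerivTerm n m (k + 1) α F) +
        totalDeriv n m j (elDerivTerm n m k α F) := by
  rw [elDerivTerm_totalDeriv, Sym.sum_filter_mem]
  congr 1
  rw [elDerivTerm, totalDeriv_eq_totalDerivation, map_sum]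
  simp [Sym.coe_cons, totalDerivI_cons, totalDeriv_eq_totalDerivation]

theorem elDeriv_totalDeriv (j : Fin n) (N : ℕ) (α : Fin m) (F : MvPolynomial (JetVar n m) ℝ) :
    elDeriv n m N α (totalDeriv n m j F) =
      (-1) ^ N * totalDeriv n m j (elDerivTerm n m N α F) := by
  induction N with
  | zero => simp [elDeriv_eq_sum_elDerivTerm, elDerivTerm_zero_totalDeriv]
  | succ N ih =>
    rw [elDeriv_eq_sum_elDerivTerm, Finset.sum_range_succ, ← elDeriv_eq_sum_elDerivTerm, ih,
      elDerivTerm_succ_totalDeriv]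
    ring

end

/-- (One dependent variable `u`, i.e. `m = 1`.)  If a
Lagrangian `L = D_j(F)` is a total derivative of a jet-space function `F`,
then its Euler–Lagrange derivative vanishes:
`δL/δu = Σ_I (−1)^{|I|} D_I(∂L/∂u_I) = 0` (the truncated sums are zero for
every sufficiently large truncation order `N`). -/
theorem elDeriv_totalDeriv_eq_zero (n : ℕ) (j : Fin n)
    (F : MvPolynomial (JetVar n 1) ℝ) :
    ∃ N₀ : ℕ, ∀ N ≥ N₀, elDeriv n 1 N 0 (totalDeriv n 1 j F) = 0 :=
  ⟨jetOrder F + 1, fun N hN => by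
    rw [elDeriv_totalDeriv, elDerivTerm_eq_zero_of_jetOrder_lt 0 (by omega),
      totalDeriv_eq_totalDerivation, map_zero, mul_zero]⟩
end

section
/- In the Lagrangian-Hamiltonian formalism, a local section σ = ϑ ∘ j of τ† : J† → M, where j : U → J^∞ is a section of π_∞ and ϑ a local section of τ₀† : J† → J^∞, satisfies the contraction identity i_{j₁σ} ω_ℒ|_σ = (d̄ϑ + d^V ℒ)|_j + (j^α_{I},_i − j^α_{Ii}) d^V p_α^{I.i}|_σ ⊗ dⁿx in local coordinates. Consequently, if ϑ is a Legendre form for ℒ and j = j_∞ s for a solution s of the Euler–Lagrange equations, then σ solves the ELH equations i_{j₁σ} ω_ℒ|_σ = 0. -/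
open MvPolynomial

/-- The partial derivative `∂g/∂xⁱ` of a function on `ℝⁿ = Fin n → ℝ`. -/
noncomputable def pd (n : ℕ) (i : Fin n) (g : (Fin n → ℝ) → ℝ) :
    (Fin n → ℝ) → ℝ :=
  fun y => fderiv ℝ g y (Pi.single i 1)

/-- Iterated partial derivative `∂_I g` over the entries of `I`. -/
noncomputable def pdI (n : ℕ) (I : Multiset (Fin n))
    (g : (Fin n → ℝ) → ℝ) : (Fin n → ℝ) → ℝ :=
  I.toList.foldr (pd n) g

/-- Evaluation of the jet coordinates along the infinite prolongation
`j = j_∞ s` of a section `s` at the point `y`: `xⁱ ↦ yⁱ`,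
`u^α_I ↦ (∂_I s^α)(y)`. -/
noncomputable def jetEval (n m : ℕ) (s : (Fin n → ℝ) → Fin m → ℝ)
    (y : Fin n → ℝ) : JetVar n m → ℝ :=
  Sum.elim (fun i => y i) (fun p => pdI n p.2 (fun z => s z p.1) y)

-- auxiliary coefficient
noncomputable def cf (n m : ℕ) (i : Fin n) : JetVar n m → MvPolynomial (JetVar n m) ℝ
  | Sum.inl _ => 0
  | Sum.inr (α, I) => X (Sum.inr (α, i ::ₘ I))

lemma totalDeriv_eq (n m : ℕ) (i : Fin n) (F : MvPolynomial (JetVar n m) ℝ)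
    (S : Finset (JetVar n m)) (hS : F.vars ⊆ S) :
    totalDeriv n m i F =
      pderiv (Sum.inl i) F + ∑ v ∈ S, cf n m i v * pderiv v F := by
  unfold totalDeriv
  congr 1
  rw [show (∑ v ∈ F.vars, match v with
      | Sum.inl _ => 0
      | Sum.inr (α, I) => X (Sum.inr (α, i ::ₘ I)) * pderiv (Sum.inr (α, I)) F)
      = ∑ v ∈ F.vars, cf n m i v * pderiv v F from
    Finset.sum_congr rfl fun v _ => by rcases v with j | ⟨α, I⟩ <;> simp [cf]]
  exact Finset.sum_subset hS fun v _ hv => by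
    rw [pderiv_eq_zero_of_notMem_vars hv, mul_zero]

lemma totalDeriv_C (n m : ℕ) (i : Fin n) (a : ℝ) :
    totalDeriv n m i (C a) = 0 := by
  simp [totalDeriv, pderiv_C, vars_C]

lemma totalDeriv_add (n m : ℕ) (i : Fin n) (p q : MvPolynomial (JetVar n m) ℝ) :
    totalDeriv n m i (p + q) = totalDeriv n m i p + totalDeriv n m i q := by
  classical
  set S := (p + q).vars ∪ p.vars ∪ q.vars with hSdef
  rw [totalDeriv_eq n m i (p + q) S (by
      exact Finset.Subset.trans (Finset.subset_union_left) Finset.subset_union_left),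
    totalDeriv_eq n m i p S (by
      exact Finset.Subset.trans (Finset.subset_union_right) Finset.subset_union_left),
    totalDeriv_eq n m i q S Finset.subset_union_right]
  simp only [map_add, mul_add, Finset.sum_add_distrib]
  ring

lemma totalDeriv_mul (n m : ℕ) (i : Fin n) (p q : MvPolynomial (JetVar n m) ℝ) :
    totalDeriv n m i (p * q) = p * totalDeriv n m i q + q * totalDeriv n m i p := by
  classical
  set S := (p * q).vars ∪ p.vars ∪ q.vars with hSdef
  rw [totalDeriv_eq n m i (p * q) S (by
      exact Finset.Subset.trans (Finset.subset_union_left) Finset.subset_union_left),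
    totalDeriv_eq n m i p S (by
      exact Finset.Subset.trans (Finset.subset_union_right) Finset.subset_union_left),
    totalDeriv_eq n m i q S Finset.subset_union_right]
  have : (∑ v ∈ S, cf n m i v * pderiv v (p * q))
      = q * (∑ v ∈ S, cf n m i v * pderiv v p)
        + p * (∑ v ∈ S, cf n m i v * pderiv v q) := by
    rw [Finset.mul_sum, Finset.mul_sum, ← Finset.sum_add_distrib]
    exact Finset.sum_congr rfl fun v _ => by rw [pderiv_mul]; ring
  rw [pderiv_mul, this]
  ring

lemma pd_smooth {n : ℕ} {g : (Fin n → ℝ) → ℝ} (hg : ContDiff ℝ (⊤ : ℕ∞) g) (i : Fin n) :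
    ContDiff ℝ (⊤ : ℕ∞) (pd n i g) := by
  unfold pd
  exact (hg.fderiv_right (by simp)).clm_apply contDiff_const

lemma pd_comm {n : ℕ} {g : (Fin n → ℝ) → ℝ} (hg : ContDiff ℝ (⊤ : ℕ∞) g) (i j : Fin n)
    (y : Fin n → ℝ) : pd n i (pd n j g) y = pd n j (pd n i g) y := by
  have hdg : ContDiff ℝ (⊤ : ℕ∞) (fderiv ℝ g) := hg.fderiv_right (by simp)
  have key : ∀ (k l : Fin n) (y : Fin n → ℝ), pd n k (pd n l g) y
      = fderiv ℝ (fderiv ℝ g) y (Pi.single k 1) (Pi.single l 1) := by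
    intro k l y
    show fderiv ℝ (fun z => fderiv ℝ g z (Pi.single l 1)) y (Pi.single k 1) = _
    rw [fderiv_clm_apply (hdg.differentiable (by simp) y) (differentiableAt_const _)]
    simp
  rw [key, key]
  exact second_derivative_symmetric
    (fun x => (hg.differentiable (by simp) x).hasFDerivAt)
    ((hdg.differentiable (by simp) y).hasFDerivAt) _ _

lemma foldr_smooth {n : ℕ} (l : List (Fin n)) {g : (Fin n → ℝ) → ℝ}
    (hg : ContDiff ℝ (⊤ : ℕ∞) g) : ContDiff ℝ (⊤ : ℕ∞) (l.foldr (pd n) g) := by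
  induction l with
  | nil => exact hg
  | cons x l ih => exact pd_smooth ih x

lemma foldr_perm {n : ℕ} {l l' : List (Fin n)} (h : l.Perm l')
    {g : (Fin n → ℝ) → ℝ} (hg : ContDiff ℝ (⊤ : ℕ∞) g) :
    l.foldr (pd n) g = l'.foldr (pd n) g := by
  induction h with
  | nil => rfl
  | cons x p ih => simp only [List.foldr_cons]; rw [ih]
  | swap x y l =>
    funext z
    exact pd_comm (foldr_smooth l hg) y x z
  | trans p q ih1 ih2 => rw [ih1, ih2]

lemma pdI_cons {n : ℕ} (i : Fin n) (I : Multiset (Fin n)) {g : (Fin n → ℝ) → ℝ}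
    (hg : ContDiff ℝ (⊤ : ℕ∞) g) :
    pdI n (i ::ₘ I) g = pd n i (pdI n I g) := by
  unfold pdI
  have hperm : (i ::ₘ I).toList.Perm (i :: I.toList) := by
    rw [← Multiset.coe_eq_coe,
      show ((i :: I.toList : List (Fin n)) : Multiset (Fin n))
        = i ::ₘ (I.toList : Multiset (Fin n)) from rfl]
    simp
  rw [foldr_perm hperm hg]
  rfl

lemma coord_smooth {n m : ℕ} {s : (Fin n → ℝ) → Fin m → ℝ} (hs : ContDiff ℝ (⊤ : ℕ∞) s)
    (v : JetVar n m) : ContDiff ℝ (⊤ : ℕ∞) (fun z => jetEval n m s z v) := by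
  rcases v with i | ⟨α, I⟩
  · exact (ContinuousLinearMap.proj i : ((Fin n → ℝ)) →L[ℝ] ℝ).contDiff
  · exact foldr_smooth I.toList (contDiff_pi.mp hs α)

lemma pd_add {n : ℕ} {f g : (Fin n → ℝ) → ℝ} {y : Fin n → ℝ}
    (hf : DifferentiableAt ℝ f y) (hg : DifferentiableAt ℝ g y) (i : Fin n) :
    pd n i (fun z => f z + g z) y = pd n i f y + pd n i g y := by
  unfold pd
  rw [fderiv_fun_add hf hg]
  rfl

lemma pd_mul {n : ℕ} {f g : (Fin n → ℝ) → ℝ} {y : Fin n → ℝ}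
    (hf : DifferentiableAt ℝ f y) (hg : DifferentiableAt ℝ g y) (i : Fin n) :
    pd n i (fun z => f z * g z) y = f y * pd n i g y + g y * pd n i f y := by
  unfold pd
  rw [fderiv_fun_mul hf hg]
  simp

lemma pd_coord {n m : ℕ} {s : (Fin n → ℝ) → Fin m → ℝ} (hs : ContDiff ℝ (⊤ : ℕ∞) s)
    (v : JetVar n m) (i : Fin n) (y : Fin n → ℝ) :
    pd n i (fun z => jetEval n m s z v) y
      = eval (jetEval n m s y) (totalDeriv n m i (X v)) := by
  classical
  rcases v with j | ⟨α, I⟩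
  · have h1 : pd n i (fun z => jetEval n m s z (Sum.inl j)) y
        = (if i = j then (1:ℝ) else 0) := by
      show fderiv ℝ (fun z : Fin n → ℝ => z j) y (Pi.single i 1) = _
      rw [show (fun z : Fin n → ℝ => z j)
          = (ContinuousLinearMap.proj j : (Fin n → ℝ) →L[ℝ] ℝ) from rfl,
        ContinuousLinearMap.fderiv]
      simp [Pi.single_apply]
      split_ifs with h1 h2 h3 <;> simp_all [eq_comm]
    rw [h1, totalDeriv_eq n m i (X (Sum.inl j)) {Sum.inl j} (by simp [vars_X])]
    simp only [cf, map_zero, zero_mul, Finset.sum_const, smul_zero, add_zero]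
    rcases eq_or_ne i j with h | h
    · simp [h, Pi.single_apply]
    · simp [h, Ne.symm h, Pi.single_apply]
  · have h1 : pd n i (fun z => jetEval n m s z (Sum.inr (α, I))) y
        = jetEval n m s y (Sum.inr (α, i ::ₘ I)) := by
      show pd n i (pdI n I (fun z => s z α)) y = pdI n (i ::ₘ I) (fun z => s z α) y
      rw [pdI_cons i I (contDiff_pi.mp hs α)]
    rw [h1, totalDeriv_eq n m i (X (Sum.inr (α, I))) {Sum.inr (α, I)} (by simp [vars_X])]
    simp [cf]

lemma chain_rule {n m : ℕ} {s : (Fin n → ℝ) → Fin m → ℝ} (hs : ContDiff ℝ (⊤ : ℕ∞) s)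
    (F : MvPolynomial (JetVar n m) ℝ) :
    ContDiff ℝ (⊤ : ℕ∞) (fun z => eval (jetEval n m s z) F) ∧
      ∀ (y : Fin n → ℝ) (i : Fin n),
        pd n i (fun z => eval (jetEval n m s z) F) y
          = eval (jetEval n m s y) (totalDeriv n m i F) := by
  induction F using MvPolynomial.induction_on with
  | C a =>
    constructor
    · simpa using (contDiff_const : ContDiff ℝ (⊤ : ℕ∞) fun _ : Fin n → ℝ => a)
    · intro y i
      simp only [eval_C, totalDeriv_C, map_zero]
      show fderiv ℝ (fun _ => a) y (Pi.single i 1) = 0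
      simp
  | add p q hp hq =>
    refine ⟨by simpa using hp.1.add hq.1, fun y i => ?_⟩
    have : (fun z => eval (jetEval n m s z) (p + q))
        = fun z => eval (jetEval n m s z) p + eval (jetEval n m s z) q := by
      funext z; simp
    rw [this, pd_add (hp.1.differentiable (by simp) y) (hq.1.differentiable (by simp) y) i,
      hp.2 y i, hq.2 y i, totalDeriv_add, map_add]
  | mul_X p v hp =>
    have hcs := coord_smooth hs v
    have heq : (fun z => eval (jetEval n m s z) (p * X v))
        = fun z => eval (jetEval n m s z) p * jetEval n m s z v := by
      funext z; simp
    constructor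
    · rw [heq]; exact hp.1.mul hcs
    · intro y i
      rw [heq, pd_mul (hp.1.differentiable (by simp) y) (hcs.differentiable (by simp) y) i,
        hp.2 y i, pd_coord hs v i y, totalDeriv_mul, map_add, map_mul, map_mul]
      simp only [eval_X]
      try ring

/-- Local-coordinate form of the contraction identity for
`σ = ϑ ∘ j_∞ s` and its consequence.  Here `L` is the Lagrangian, `ϑ` a
Legendre form with coefficients `ϑ_α^{I.i}` satisfying the local form of
`E(ℒ) − d^V ℒ = d̄ϑ`, i.e. for each `(α, I)`
`δ^I_∅ (δL/δu^α) − ∂^I_α L = −(D_i ϑ_α^{I.i} + δ^I_{Ji} ϑ_α^{J.i})`,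
and `s` is a solution of the Euler–Lagrange equations.  Then:
(a) for holonomic `j = j_∞ s` one has
`σ_α^{I.i},_i = (D_i ϑ_α^{I.i}) ∘ j` (the chain rule
`∂_i (F ∘ j) = (D_i F) ∘ j` for every jet function `F`), which yields the
contraction identity `i_{j₁σ} ω_ℒ|_σ = (d̄ϑ + d^V ℒ)|_j + …`; and
(b) `σ` solves the ELH equations
`σ_α^{I.i},_i = (∂^I_α L) ∘ j − δ^I_{Ji} σ_α^{J.i}`. -/
theorem elh_solution_from_legendre_form_and_el (n m N : ℕ)
    (L : MvPolynomial (JetVar n m) ℝ)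
    (ϑ : Fin m → Multiset (Fin n) → Fin n → MvPolynomial (JetVar n m) ℝ)
    (hLvars : ∀ (α : Fin m) (I : Multiset (Fin n)),
      Sum.inr (α, I) ∈ L.vars → Multiset.card I ≤ N)
    (hLegendre : ∀ (α : Fin m) (I : Multiset (Fin n)),
      (if I = 0 then elDeriv n m N α L else 0) - pderiv (Sum.inr (α, I)) L
        = -((∑ i : Fin n, totalDeriv n m i (ϑ α I i))
            + ∑ i : Fin n, (if i ∈ I then ϑ α (I.erase i) i else 0)))
    (s : (Fin n → ℝ) → Fin m → ℝ) (hs : ContDiff ℝ (⊤ : ℕ∞) s)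
    (hEL : ∀ (y : Fin n → ℝ) (α : Fin m),
      MvPolynomial.eval (jetEval n m s y) (elDeriv n m N α L) = 0) :
    -- (a) the chain rule along the holonomic section, giving the
    -- contraction identity:
    (∀ (y : Fin n → ℝ) (i : Fin n) (F : MvPolynomial (JetVar n m) ℝ),
        pd n i (fun z => MvPolynomial.eval (jetEval n m s z) F) y
          = MvPolynomial.eval (jetEval n m s y) (totalDeriv n m i F))
    -- (b) σ = ϑ ∘ j_∞ s solves the ELH equations:
    ∧ (∀ (y : Fin n → ℝ) (α : Fin m) (I : Multiset (Fin n)),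
        ∑ i : Fin n,
            pd n i (fun z => MvPolynomial.eval (jetEval n m s z) (ϑ α I i)) y
          = MvPolynomial.eval (jetEval n m s y) (pderiv (Sum.inr (α, I)) L)
            - ∑ i : Fin n,
                (if i ∈ I then
                  MvPolynomial.eval (jetEval n m s y) (ϑ α (I.erase i) i)
                else 0)) := by
  have part_a : ∀ (y : Fin n → ℝ) (i : Fin n) (F : MvPolynomial (JetVar n m) ℝ),
      pd n i (fun z => MvPolynomial.eval (jetEval n m s z) F) y
        = MvPolynomial.eval (jetEval n m s y) (totalDeriv n m i F) :=
    fun y i F => (chain_rule hs F).2 y i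
  refine ⟨part_a, ?_⟩
  intro y α I
  have hL := congrArg (MvPolynomial.eval (jetEval n m s y)) (hLegendre α I)
  have h0 : MvPolynomial.eval (jetEval n m s y)
      (if I = 0 then elDeriv n m N α L else 0) = 0 := by
    split_ifs with h
    · exact hEL y α
    · simp
  simp only [map_sub, map_neg, map_add, map_sum, h0,
    apply_ite (MvPolynomial.eval (jetEval n m s y)), map_zero] at hL
  have hA : ∑ i : Fin n,
      pd n i (fun z => MvPolynomial.eval (jetEval n m s z) (ϑ α I i)) y
        = ∑ i : Fin n,
          MvPolynomial.eval (jetEval n m s y) (totalDeriv n m i (ϑ α I i)) :=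
    Finset.sum_congr rfl fun i _ => part_a y i (ϑ α I i)
  rw [hA]
  linarith [hL]
end
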